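/- arXiv:1504.08061 — 5 statements merged into one kernel-verified Lean document; each statement's English description precedes it below -/
import Mathlib

section
/- Let K be a finite-dimensional vector space with K = E ⊕ J = V ⊕ H. Define Ẽ = Γ₁(V) and J̃ = Γ₂(V), where Γ₁, Γ₂ are the projections onto E and J along each other. If V ∩ E = {0} and V ∩ J = {0}, then Ẽ ⊕ J̃ = V ⊕ U, where U = Π₂(Γ₁(V)) and Π₂ is the projection onto H along V. In particular Ẽ + J̃ is a direct sum equal to V + U and V ∩ U = {0}. -/
open Submodule Module

theorem stmt1 (K : Type*) [AddCommGroup K] [Module ℂ K] [FiniteDimensional ℂ K]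
    (E J V H : Submodule ℂ K) (hEJ : IsCompl E J) (hVH : IsCompl V H)
    (hVE : V ⊓ E = ⊥) (hVJ : V ⊓ J = ⊥)
    (Γ₁ : K →ₗ[ℂ] K) (Γ₂ : K →ₗ[ℂ] K) (Pi2 : K →ₗ[ℂ] K)
    (hΓ₁ : Γ₁ = E.subtype ∘ₗ (E.linearProjOfIsCompl J hEJ))
    (hΓ₂ : Γ₂ = J.subtype ∘ₗ (J.linearProjOfIsCompl E hEJ.symm))
    (hPi2 : Pi2 = H.subtype ∘ₗ (H.linearProjOfIsCompl V hVH.symm))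
    (Etil Jtil U : Submodule ℂ K)
    (hEtil : Etil = V.map Γ₁) (hJtil : Jtil = V.map Γ₂)
    (hU : U = (V.map Γ₁).map Pi2) :
    Disjoint Etil Jtil ∧ Disjoint V U ∧ Etil ⊔ Jtil = V ⊔ U := by
  subst hEtil hJtil hU
  have hE : V.map Γ₁ ≤ E := by
    rintro x ⟨v, hv, rfl⟩
    rw [hΓ₁]; exact (E.linearProjOfIsCompl J hEJ v).2
  have hJ : V.map Γ₂ ≤ J := by
    rintro x ⟨v, hv, rfl⟩
    rw [hΓ₂]; exact (J.linearProjOfIsCompl E hEJ.symm v).2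
  have hUH : (V.map Γ₁).map Pi2 ≤ H := by
    rintro x ⟨y, hy, rfl⟩
    rw [hPi2]; exact (H.linearProjOfIsCompl V hVH.symm y).2
  have hsum : ∀ x : K, Γ₁ x + Γ₂ x = x := by
    intro x
    rw [hΓ₁, hΓ₂]
    exact Submodule.projection_add_projection_eq_self hEJ x
  have hsum2 : ∀ x : K, ((V.linearProjOfIsCompl H hVH x : K)) + Pi2 x = x := by
    intro x
    rw [hPi2]
    exact Submodule.projection_add_projection_eq_self hVH x
  have hVle : V ≤ V.map Γ₁ ⊔ V.map Γ₂ := by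
    intro w hw
    have h1 : Γ₁ w ∈ V.map Γ₁ ⊔ V.map Γ₂ :=
      le_sup_left (α := Submodule ℂ K) ⟨w, hw, rfl⟩
    have h2 : Γ₂ w ∈ V.map Γ₁ ⊔ V.map Γ₂ :=
      le_sup_right (α := Submodule ℂ K) ⟨w, hw, rfl⟩
    have := add_mem h1 h2
    rwa [hsum w] at this
  have hΓ₁le : ∀ v ∈ V, Γ₁ v ∈ V ⊔ (V.map Γ₁).map Pi2 := by
    intro v hv
    have h1 : ((V.linearProjOfIsCompl H hVH (Γ₁ v) : K)) ∈ V ⊔ (V.map Γ₁).map Pi2 :=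
      le_sup_left (α := Submodule ℂ K) (V.linearProjOfIsCompl H hVH (Γ₁ v)).2
    have h2 : Pi2 (Γ₁ v) ∈ V ⊔ (V.map Γ₁).map Pi2 :=
      le_sup_right (α := Submodule ℂ K) ⟨Γ₁ v, ⟨v, hv, rfl⟩, rfl⟩
    have := add_mem h1 h2
    rwa [hsum2 (Γ₁ v)] at this
  refine ⟨hEJ.disjoint.mono hE hJ, hVH.disjoint.mono le_rfl hUH, le_antisymm ?_ ?_⟩
  · refine sup_le ?_ ?_
    · rintro x ⟨v, hv, rfl⟩
      exact hΓ₁le v hv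
    · rintro x ⟨v, hv, rfl⟩
      have hv' : v ∈ V ⊔ (V.map Γ₁).map Pi2 := le_sup_left (α := Submodule ℂ K) hv
      have hkey : Γ₂ v = v - Γ₁ v := by
        rw [eq_sub_iff_add_eq']; exact hsum v
      rw [hkey]
      exact sub_mem hv' (hΓ₁le v hv)
  · refine sup_le (hVle.trans le_rfl) ?_
    rintro x ⟨y, ⟨v, hv, rfl⟩, rfl⟩
    have h1 : Γ₁ v ∈ V.map Γ₁ ⊔ V.map Γ₂ :=
      le_sup_left (α := Submodule ℂ K) ⟨v, hv, rfl⟩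
    have h2 : ((V.linearProjOfIsCompl H hVH (Γ₁ v) : K)) ∈ V.map Γ₁ ⊔ V.map Γ₂ :=
      hVle (V.linearProjOfIsCompl H hVH (Γ₁ v)).2
    have hkey : Pi2 (Γ₁ v) = Γ₁ v - ((V.linearProjOfIsCompl H hVH (Γ₁ v) : K)) := by
      rw [eq_sub_iff_add_eq']; exact hsum2 (Γ₁ v)
    rw [hkey]
    exact sub_mem h1 h2
end

section
/- With the setup K = E ⊕ J = V ⊕ H, Ẽ = Γ₁(V), J̃ = Γ₂(V), U = Π₂Γ₁(V), and assuming V ∩ E = 0, V ∩ J = 0, H ∩ Ẽ = 0, and H ∩ J̃ = 0, one has the direct sum decompositions E = Ẽ ⊕ (E ∩ H) and J = J̃ ⊕ (J ∩ H), and consequently H = U ⊕ (E ∩ H) ⊕ (J ∩ H). -/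
/-!
`Γ₁` is injective on `V` (its kernel `J` meets `V` trivially), so `dim Ẽ = dim V = codim H`, and
`Ẽ ∩ H = 0` makes `Ẽ` a complement of `H`; as `Ẽ ≤ E`, the modular law splits
`E = Ẽ ⊕ (E ∩ H)`, and likewise `J = J̃ ⊕ (J ∩ H)`. Applying `Π₂` to `K = E ⊕ J` shows that `H`
is spanned by `U`, `E ∩ H` and `J ∩ H`, and since `dim U ≤ dim Ẽ` a dimension count shows that
this sum is direct.
-/

open Submodule Module

theorem IsCompl.disjoint_inf_and_sup_inf_eq_of_le {α : Type*} [Lattice α] [BoundedOrder α]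
    [IsModularLattice α] {a b c : α} (h : IsCompl a b) (hac : a ≤ c) :
    Disjoint a (c ⊓ b) ∧ a ⊔ c ⊓ b = c := by
  refine ⟨h.disjoint.mono_right inf_le_right, ?_⟩
  rw [inf_comm, ← sup_inf_assoc_of_le b hac, h.sup_eq_top, top_inf_eq]

namespace Submodule

variable {k M N : Type*} [DivisionRing k] [AddCommGroup M] [Module k M] [AddCommGroup N]
  [Module k N]

theorem finrank_map_of_disjoint_ker {f : M →ₗ[k] N} {V : Submodule k M}
    (h : Disjoint V (LinearMap.ker f)) : finrank k (V.map f) = finrank k V := by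
  have hinj : Function.Injective (f ∘ₗ V.subtype) := by
    rw [← LinearMap.ker_eq_bot, LinearMap.ker_comp, ← disjoint_iff_comap_eq_bot]
    exact h
  rw [← LinearMap.finrank_range_of_inj hinj, LinearMap.range_comp, range_subtype]

theorem disjoint_of_finrank_add_le_finrank_sup [FiniteDimensional k M] {U W : Submodule k M}
    (h : finrank k U + finrank k W ≤ finrank k ↥(U ⊔ W)) : Disjoint U W := by
  have hrank := finrank_sup_add_finrank_inf_eq U W
  rw [disjoint_iff, ← finrank_eq_zero]
  omega

theorem map_projection_of_le {p q W : Submodule k M} (hpq : IsCompl p q) (hW : W ≤ p) :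
    W.map (p.projection q hpq) = W := by
  ext x
  constructor
  · rintro ⟨y, hy, rfl⟩
    rwa [projection_apply_of_mem_left hpq (hW hy)]
  · intro hx
    exact ⟨x, hx, projection_apply_of_mem_left hpq (hW hx)⟩

variable {E J V H : Submodule k M}

theorem map_projection_le (hEJ : IsCompl E J) : V.map (E.projection J hEJ) ≤ E :=
  LinearMap.map_le_range.trans (range_projection hEJ).le

theorem map_map_projection_symm_le (hEJ : IsCompl E J) (hHV : IsCompl H V) :
    (V.map (J.projection E hEJ.symm)).map (H.projection V hHV) ≤
      (V.map (E.projection J hEJ)).map (H.projection V hHV) := by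
  rintro _ ⟨_, ⟨v, hv, rfl⟩, rfl⟩
  -- `Π₂ Γ₂ v = Π₂ (v - Γ₁ v) = Π₂ Γ₁ (-v)` because `Π₂` kills `V`.
  refine ⟨E.projection J hEJ (-v), ⟨-v, neg_mem hv, rfl⟩, ?_⟩
  have hPv : H.projection V hHV v = 0 := projection_apply_of_mem_right hHV hv
  simp [projection_eq_self_sub_projection hEJ, hPv]

theorem map_projection_sup_inf_sup_inf_eq (hEJ : IsCompl E J) (hHV : IsCompl H V)
    {A B : Submodule k M} (hA : A ⊔ E ⊓ H = E) (hB : B ⊔ J ⊓ H = J)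
    (hBA : B.map (H.projection V hHV) ≤ A.map (H.projection V hHV)) :
    A.map (H.projection V hHV) ⊔ E ⊓ H ⊔ J ⊓ H = H := by
  set P := H.projection V hHV
  have hPH : ∀ W ≤ H, W.map P = W := fun W hW => map_projection_of_le hHV hW
  refine le_antisymm
    (sup_le (sup_le (LinearMap.map_le_range.trans (range_projection hHV).le) inf_le_right)
      inf_le_right) ?_
  calc H = (E ⊔ J).map P := by rw [hEJ.sup_eq_top, map_top, range_projection]
    _ = (A ⊔ E ⊓ H ⊔ (B ⊔ J ⊓ H)).map P := by rw [hA, hB]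
    _ = A.map P ⊔ E ⊓ H ⊔ (B.map P ⊔ J ⊓ H) := by
      rw [map_sup, map_sup, map_sup, hPH _ inf_le_right, hPH _ inf_le_right]
    _ ≤ A.map P ⊔ E ⊓ H ⊔ J ⊓ H := by
      refine sup_le le_sup_left (sup_le ?_ le_sup_right)
      exact hBA.trans (le_sup_left.trans le_sup_left)

variable [FiniteDimensional k M]

theorem isCompl_map_projection (hEJ : IsCompl E J) (hVH : IsCompl V H) (hVJ : Disjoint V J)
    (hH : Disjoint (V.map (E.projection J hEJ)) H) : IsCompl (V.map (E.projection J hEJ)) H := by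
  have hrank : finrank k (V.map (E.projection J hEJ)) = finrank k V :=
    finrank_map_of_disjoint_ker (by rwa [ker_projection])
  refine (isCompl_iff_disjoint _ _ ?_).2 hH
  rw [hrank, finrank_add_eq_of_isCompl hVH]

theorem disjoint_sup_inf_inf_of_finrank_le (hEJ : IsCompl E J) {A B U : Submodule k M}
    (hA : IsCompl A H) (hB : IsCompl B H) (hAE : A ≤ E) (hBJ : B ≤ J)
    (hU : finrank k U ≤ finrank k A) (hsup : U ⊔ E ⊓ H ⊔ J ⊓ H = H) :
    Disjoint U (E ⊓ H ⊔ J ⊓ H) := by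
  obtain ⟨hAd, hAs⟩ := hA.disjoint_inf_and_sup_inf_eq_of_le hAE
  obtain ⟨hBd, hBs⟩ := hB.disjoint_inf_and_sup_inf_eq_of_le hBJ
  have hE := finrank_sup_add_finrank_inf_eq A (E ⊓ H)
  have hJ := finrank_sup_add_finrank_inf_eq B (J ⊓ H)
  have hEJH := finrank_sup_add_finrank_inf_eq (E ⊓ H) (J ⊓ H)
  rw [hAs, hAd.eq_bot, finrank_bot] at hE
  rw [hBs, hBd.eq_bot, finrank_bot] at hJ
  rw [(hEJ.disjoint.mono inf_le_left inf_le_left).eq_bot, finrank_bot] at hEJH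
  have hK := finrank_add_eq_of_isCompl hEJ
  have hAH := finrank_add_eq_of_isCompl hA
  have hBH := finrank_add_eq_of_isCompl hB
  apply disjoint_of_finrank_add_le_finrank_sup
  rw [← sup_assoc, hsup]
  omega

end Submodule

theorem stmt2 (K : Type*) [AddCommGroup K] [Module ℂ K] [FiniteDimensional ℂ K]
    (E J V H : Submodule ℂ K) (hEJ : IsCompl E J) (hVH : IsCompl V H)
    (Γ₁ : K →ₗ[ℂ] K) (Γ₂ : K →ₗ[ℂ] K) (Pi2 : K →ₗ[ℂ] K)
    (hΓ₁ : Γ₁ = E.subtype ∘ₗ (E.linearProjOfIsCompl J hEJ))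
    (hΓ₂ : Γ₂ = J.subtype ∘ₗ (J.linearProjOfIsCompl E hEJ.symm))
    (hPi2 : Pi2 = H.subtype ∘ₗ (H.linearProjOfIsCompl V hVH.symm))
    (Etil Jtil U : Submodule ℂ K)
    (hEtil : Etil = V.map Γ₁) (hJtil : Jtil = V.map Γ₂)
    (hU : U = (V.map Γ₁).map Pi2)
    (hVE : V ⊓ E = ⊥) (hVJ : V ⊓ J = ⊥)
    (hHE : H ⊓ Etil = ⊥) (hHJ : H ⊓ Jtil = ⊥) :
    (Disjoint Etil (E ⊓ H) ∧ Etil ⊔ (E ⊓ H) = E) ∧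
    (Disjoint Jtil (J ⊓ H) ∧ Jtil ⊔ (J ⊓ H) = J) ∧
    (Disjoint U ((E ⊓ H) ⊔ (J ⊓ H)) ∧ Disjoint (E ⊓ H) (J ⊓ H) ∧
      U ⊔ (E ⊓ H) ⊔ (J ⊓ H) = H) := by
  obtain rfl : Γ₁ = E.projection J hEJ := hΓ₁
  obtain rfl : Γ₂ = J.projection E hEJ.symm := hΓ₂
  obtain rfl : Pi2 = H.projection V hVH.symm := hPi2
  subst hEtil hJtil hU
  have hE := isCompl_map_projection hEJ hVH (disjoint_iff.2 hVJ) (disjoint_iff.2 hHE).symm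
  have hJ := isCompl_map_projection hEJ.symm hVH (disjoint_iff.2 hVE) (disjoint_iff.2 hHJ).symm
  obtain ⟨hEd, hEs⟩ := hE.disjoint_inf_and_sup_inf_eq_of_le (map_projection_le hEJ)
  obtain ⟨hJd, hJs⟩ := hJ.disjoint_inf_and_sup_inf_eq_of_le (map_projection_le hEJ.symm)
  have hH := map_projection_sup_inf_sup_inf_eq hEJ hVH.symm hEs hJs
    (map_map_projection_symm_le hEJ hVH.symm)
  refine ⟨⟨hEd, hEs⟩, ⟨hJd, hJs⟩, ?_, hEJ.disjoint.mono inf_le_left inf_le_left, hH⟩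
  exact disjoint_sup_inf_inf_of_finrank_le hEJ hE hJ (map_projection_le hEJ)
    (map_projection_le hEJ.symm) (finrank_map_le _ _) hH
end

section
/- Let K = E ⊕ J = V ⊕ P₁ ⊕ ... ⊕ Pₙ with dim V = v, dim E = q₁, dim J = q₂, dim Pⱼ = pⱼ, and suppose K = V ⊕ Λ₁(E) ⊕ ... ⊕ Λₙ(E) (pruned with respect to E). Then pⱼ ≤ q₁ for each j, and q₂ ≤ v + (n-1)q₁. -/
open Submodule Module

lemma aux_finrank_finset_sup {K : Type*} [AddCommGroup K] [Module ℂ K]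
    [FiniteDimensional ℂ K] {ι : Type*} (s : Finset ι) (P : ι → Submodule ℂ K) :
    finrank ℂ (s.sup P : Submodule ℂ K) ≤ ∑ j ∈ s, finrank ℂ (P j) := by
  classical
  induction s using Finset.induction with
  | empty => simp
  | @insert a s h ih =>
    rw [Finset.sup_insert, Finset.sum_insert h]  
    calc finrank ℂ ↥(P a ⊔ s.sup P) ≤ finrank ℂ (P a) + finrank ℂ (s.sup P : Submodule ℂ K) :=
          Submodule.finrank_add_le_finrank_add_finrank _ _
      _ ≤ _ := by omega

theorem stmt6 (K : Type*) [AddCommGroup K] [Module ℂ K] [FiniteDimensional ℂ K]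
    (E J V : Submodule ℂ K) (n : ℕ) (P : Fin n → Submodule ℂ K)
    (Λ : Fin n → (K →ₗ[ℂ] K)) (Pi1 : K →ₗ[ℂ] K)
    (hEJ : Disjoint E J) (htopEJ : E ⊔ J = ⊤)
    (hrangeV : LinearMap.range Pi1 = V)
    (hrange : ∀ j, LinearMap.range (Λ j) = P j)
    (hidemV : Pi1 ∘ₗ Pi1 = Pi1)
    (hidem : ∀ j, (Λ j) ∘ₗ (Λ j) = Λ j)
    (horth : ∀ j k, j ≠ k → (Λ j) ∘ₗ (Λ k) = 0)
    (horthV : ∀ j, Pi1 ∘ₗ (Λ j) = 0 ∧ (Λ j) ∘ₗ Pi1 = 0)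
    (hsum : Pi1 + ∑ j, Λ j = LinearMap.id)
    (hpruned : ∀ j, P j = E.map (Λ j)) :
    (∀ j, finrank ℂ (P j) ≤ finrank ℂ E) ∧
    finrank ℂ J ≤ finrank ℂ V + (n - 1) * finrank ℂ E := by
  classical
  have hPle : ∀ j, finrank ℂ (P j) ≤ finrank ℂ E := fun j => by
    rw [hpruned j]; exact Submodule.finrank_map_le _ _
  refine ⟨hPle, ?_⟩
  -- dim E + dim J = dim K
  have hcompl : IsCompl E J := ⟨hEJ, codisjoint_iff.mpr htopEJ⟩
  have hEJdim : finrank ℂ E + finrank ℂ J = finrank ℂ K :=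
    Submodule.finrank_add_eq_of_isCompl hcompl
  -- K = V ⊔ ⨆ Pⱼ
  have htop : V ⊔ Finset.univ.sup P = ⊤ := by
    rw [eq_top_iff]
    intro x _
    have hx : Pi1 x + ∑ j, Λ j x = x := by
      have := congrArg (fun f => f x) hsum
      simpa using this
    rw [← hx]
    refine Submodule.add_mem _ (Submodule.mem_sup_left ?_) ?_
    · rw [← hrangeV]; exact LinearMap.mem_range_self _ _
    · refine Submodule.sum_mem _ fun j _ => Submodule.mem_sup_right ?_
      have : Λ j x ∈ P j := by rw [← hrange j]; exact LinearMap.mem_range_self _ _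
      exact (Finset.le_sup (Finset.mem_univ j) : P j ≤ Finset.univ.sup P) this
  have hKle : finrank ℂ K ≤ finrank ℂ V + ∑ j, finrank ℂ (P j) := by
    calc finrank ℂ K = finrank ℂ (V ⊔ Finset.univ.sup P : Submodule ℂ K) := by
          rw [htop]; exact (finrank_top ℂ K).symm
      _ ≤ finrank ℂ V + finrank ℂ (Finset.univ.sup P : Submodule ℂ K) :=
          Submodule.finrank_add_le_finrank_add_finrank _ _
      _ ≤ _ := by
          have := aux_finrank_finset_sup (Finset.univ) P
          omega
  have hsumle : ∑ j, finrank ℂ (P j) ≤ n * finrank ℂ E := by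
    calc ∑ j, finrank ℂ (P j) ≤ ∑ _j : Fin n, finrank ℂ E :=
          Finset.sum_le_sum fun j _ => hPle j
      _ = n * finrank ℂ E := by simp [Finset.sum_const, mul_comm]
  rcases n with _ | m
  · have : finrank ℂ K ≤ finrank ℂ V := by simpa using hKle
    simpa using (by omega : finrank ℂ J ≤ finrank ℂ V)
  · have : (m + 1) * finrank ℂ E = m * finrank ℂ E + finrank ℂ E := by ring
    simp only [Nat.succ_sub_one]
    omega
end

section
/- The number of monomials z₁^{a₁} z₂^{a₂} z₃^{a₃} with nonnegative integers a₁+a₂+a₃ = 1+q₁ and 0 ≤ aᵢ ≤ pᵢ for i = 1,2,3, where 1+q₁+q₂ = p₁+p₂+p₃ = h and p₁ ≥ p₂ ≥ p₃, equals k₁ + 1 with k₁ = (2(1+q₁)q₂ - p₁² - p₂² - p₃² + h)/2. -/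
lemma sumSubRange (N p : ℕ) : ∑ m ∈ Finset.range N, (m - p) = ∑ k ∈ Finset.range (N - p), k := by
  induction N with
  | zero => simp
  | succ N ih =>
      rw [Finset.sum_range_succ, ih]
      by_cases hp : p ≤ N
      · rw [show N + 1 - p = (N - p) + 1 by omega, Finset.sum_range_succ]
      · have h1 : N + 1 - p = 0 := by omega
        have h2 : N - p = 0 := by omega
        simp [h1, h2, Nat.sub_eq_zero_of_le (le_of_not_ge hp)]

lemma pairCard (p₂ p₃ m : ℕ) :
    (((Finset.range (p₂+1)) ×ˢ (Finset.range (p₃+1))).filter (fun s => s.1 + s.2 = m)).card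
      = m + 1 - (m - p₂) - (m - p₃) := by
  have hset : ((Finset.range (p₂+1)) ×ˢ (Finset.range (p₃+1))).filter (fun s => s.1 + s.2 = m)
      = (Finset.Icc (m - p₃) (min m p₂)).image (fun b => (b, m - b)) := by
    ext ⟨b, c⟩
    simp only [Finset.mem_filter, Finset.mem_product, Finset.mem_range, Finset.mem_image,
      Finset.mem_Icc, Prod.mk.injEq]
    constructor
    · rintro ⟨⟨hb, hc⟩, hs⟩
      exact ⟨b, ⟨by omega, by omega⟩, rfl, by omega⟩
    · rintro ⟨x, ⟨hx1, hx2⟩, rfl, rfl⟩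
      refine ⟨⟨by omega, by omega⟩, by omega⟩
  rw [hset, Finset.card_image_of_injOn, Nat.card_Icc]
  · omega
  · intro x _ y _ hxy
    simpa using congrArg Prod.fst hxy

set_option maxHeartbeats 1000000 in
theorem stmt8 (q₁ q₂ p₁ p₂ p₃ h : ℕ) (k₁ : ℤ)
    (h1 : 1 + q₁ + q₂ = h) (h2 : p₁ + p₂ + p₃ = h)
    (hord : p₃ ≤ p₂ ∧ p₂ ≤ p₁)
    (hc1 : p₁ ≤ 1 + q₁ ∧ p₂ ≤ 1 + q₁ ∧ p₃ ≤ 1 + q₁)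
    (hc2 : p₁ ≤ 1 + q₂ ∧ p₂ ≤ 1 + q₂ ∧ p₃ ≤ 1 + q₂)
    (hk₁ : 2 * k₁ = 2 * (1 + (q₁:ℤ)) * q₂ - (p₁:ℤ)^2 - (p₂:ℤ)^2 - (p₃:ℤ)^2 + h) :
    ((((Finset.range (p₁+1)) ×ˢ (Finset.range (p₂+1)) ×ˢ (Finset.range (p₃+1))).filter
        (fun t => t.1 + t.2.1 + t.2.2 = 1 + q₁)).card : ℤ) = k₁ + 1 := by
  set n := 1 + q₁ with hn
  set L := n - p₁ with hL
  have hp1n : p₁ ≤ n := hc1.1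
  have hnb : n ≤ p₂ + p₃ + 1 := by omega
  have hLp2 : L ≤ p₂ + 1 := by omega
  have hLp3 : L ≤ p₃ + 1 := by omega
  -- Step 1: card as a sum over the first coordinate
  have step1 : (((Finset.range (p₁+1)) ×ˢ (Finset.range (p₂+1)) ×ˢ (Finset.range (p₃+1))).filter
        (fun t => t.1 + t.2.1 + t.2.2 = n)).card
      = ∑ a ∈ Finset.range (p₁+1), ((n - a) + 1 - ((n - a) - p₂) - ((n - a) - p₃)) := by
    rw [Finset.card_filter, Finset.sum_product]
    refine Finset.sum_congr rfl ?_
    intro a ha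
    have han : a ≤ n := le_trans (by simpa [Nat.lt_succ_iff] using ha) hp1n
    rw [← pairCard p₂ p₃ (n - a), Finset.card_filter]
    refine Finset.sum_congr rfl ?_
    intro y _
    congr 1
    simp only [eq_iff_iff]
    omega
  -- Step 2: reflect the sum
  have step2 : ∑ a ∈ Finset.range (p₁+1), ((n - a) + 1 - ((n - a) - p₂) - ((n - a) - p₃))
      = ∑ j ∈ Finset.range (p₁+1), ((L + j) + 1 - ((L + j) - p₂) - ((L + j) - p₃)) := by
    rw [← Finset.sum_range_reflect (fun a => ((n - a) + 1 - ((n - a) - p₂) - ((n - a) - p₃))) (p₁+1)]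
    refine Finset.sum_congr rfl ?_
    intro j hj
    have hj' : j ≤ p₁ := by simpa [Nat.lt_succ_iff] using hj
    have : n - (p₁ + 1 - 1 - j) = L + j := by omega
    rw [this]
  rw [step1, step2]
  -- Step 3: evaluate
  have key : ∀ p : ℕ, L ≤ p + 1 → p ≤ n →
      (∑ j ∈ Finset.range (p₁+1), ((L + j) - p)) * 2 = (n + 1 - p) * (n - p) := by
    intro p hLp hpn
    have hsplit : ∑ x ∈ Finset.range (n+1), (x - p)
        = ∑ x ∈ Finset.range L, (x - p) + ∑ j ∈ Finset.range (p₁+1), ((L + j) - p) := by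
      rw [show n + 1 = L + (p₁ + 1) by omega, Finset.sum_range_add]
    have hzero : ∑ x ∈ Finset.range L, (x - p) = 0 := by
      rw [sumSubRange]
      have : L - p ≤ 1 := by omega
      interval_cases hv : (L - p) <;> simp
    rw [sumSubRange] at hsplit
    have hg := Finset.sum_range_id_mul_two (n + 1 - p)
    rw [show n + 1 - p - 1 = n - p by omega] at hg
    omega
  have k2 := key p₂ hLp2 (by omega)
  have k3 := key p₃ hLp3 (by omega)
  zify [show p₂ ≤ n + 1 by omega, show p₂ ≤ n by omega] at k2
  zify [show p₃ ≤ n + 1 by omega, show p₃ ≤ n by omega] at k3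
  have hterm : ∀ j ∈ Finset.range (p₁+1),
      (((L + j) + 1 - ((L + j) - p₂) - ((L + j) - p₃) : ℕ) : ℤ)
        = ((L + j : ℕ) : ℤ) + 1 - (((L + j) - p₂ : ℕ) : ℤ) - (((L + j) - p₃ : ℕ) : ℤ) := by
    intro j hj
    simp only [Finset.mem_range] at hj
    have : L + j ≤ p₂ + p₃ + 1 := by omega
    omega
  have hcast : ((∑ j ∈ Finset.range (p₁+1),
        ((L + j) + 1 - ((L + j) - p₂) - ((L + j) - p₃)) : ℕ) : ℤ)
      = ∑ j ∈ Finset.range (p₁+1),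
      (((L:ℤ) + j + 1) - (((L + j) - p₂ : ℕ) : ℤ) - (((L + j) - p₃ : ℕ) : ℤ)) := by
    rw [Nat.cast_sum]
    refine Finset.sum_congr rfl ?_
    intro j hj
    rw [hterm j hj]
    push_cast
    ring
  rw [Finset.sum_sub_distrib, Finset.sum_sub_distrib, ← Nat.cast_sum, ← Nat.cast_sum] at hcast
  have hT1 : (∑ j ∈ Finset.range (p₁+1), ((L:ℤ) + j + 1)) * 2
      = ((p₁:ℤ)+1) * (2*(L:ℤ)+2) + (p₁:ℤ) * ((p₁:ℤ)+1) := by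
    have hg := congrArg (Nat.cast (R := ℤ)) (Finset.sum_range_id_mul_two (p₁+1))
    push_cast at hg
    rw [Finset.sum_add_distrib, Finset.sum_add_distrib]
    simp only [Finset.sum_const, Finset.card_range, nsmul_eq_mul, mul_one]
    push_cast
    linear_combination hg
  have hLz : (L:ℤ) = 1 + (q₁:ℤ) - p₁ := by omega
  have hnz : ((n:ℕ):ℤ) = 1 + (q₁:ℤ) := by omega
  have h2card : 2 * ((∑ j ∈ Finset.range (p₁+1),
        ((L + j) + 1 - ((L + j) - p₂) - ((L + j) - p₃)) : ℕ) : ℤ)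
      = ((p₁:ℤ)+1) * (2*(L:ℤ)+2) + (p₁:ℤ) * ((p₁:ℤ)+1)
        - (((n:ℕ):ℤ)+1-p₂) * (((n:ℕ):ℤ)-p₂) - (((n:ℕ):ℤ)+1-p₃) * (((n:ℕ):ℤ)-p₃) := by
    push_cast at hcast
    rw [Nat.cast_sum]
    linarith [hcast, hT1, k2, k3]
  rw [hLz, hnz] at h2card
  have h1' : 1 + (q₁:ℤ) + q₂ = h := by exact_mod_cast congrArg (Nat.cast (R := ℤ)) h1
  have h2' : (p₁:ℤ) + p₂ + p₃ = h := by exact_mod_cast congrArg (Nat.cast (R := ℤ)) h2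
  have hE : ((p₁:ℤ)+1) * (2*(1 + (q₁:ℤ) - p₁)+2) + (p₁:ℤ) * ((p₁:ℤ)+1)
        - ((1 + (q₁:ℤ))+1-p₂) * ((1 + (q₁:ℤ))-p₂) - ((1 + (q₁:ℤ))+1-p₃) * ((1 + (q₁:ℤ))-p₃)
      = 2 * k₁ + 2 := by
    linear_combination (-1) * hk₁ + (2*(1+(q₁:ℤ))+1) * h2' + (-(2*(1+(q₁:ℤ)))) * h1'
  linarith [h2card, hE]
end

section
/- Let H = U ⊕ E ⊕ J be a finite-dimensional vector space with projections Γ₀, Γ₁, Γ₂, and let L be an invertible operator on H such that the Z-problem (find j ∈ U, E₀ ∈ E, J₀ ∈ J with j + J₀ = L(e + E₀) for given e ∈ U) is uniquely solvable and the operator (Γ₀+Γ₂)L⁻¹(Γ₀+Γ₂) restricted to U ⊕ J is invertible. Then the solution operator satisfies Z = Γ₀ ∘ [(Γ₀+Γ₂)L⁻¹(Γ₀+Γ₂)|_{U⊕J}]⁻¹ ∘ Γ₀ as maps from U to U. -/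
open Submodule

theorem stmt19 (H : Type*) [AddCommGroup H] [Module ℂ H] [FiniteDimensional ℂ H]
    (U E J : Submodule ℂ H)
    (Γ₀ Γ₁ Γ₂ : H →ₗ[ℂ] H)
    (hr0 : LinearMap.range Γ₀ = U) (hr1 : LinearMap.range Γ₁ = E)
    (hr2 : LinearMap.range Γ₂ = J)
    (hi0 : Γ₀ ∘ₗ Γ₀ = Γ₀) (hi1 : Γ₁ ∘ₗ Γ₁ = Γ₁) (hi2 : Γ₂ ∘ₗ Γ₂ = Γ₂)
    (ho01 : Γ₀ ∘ₗ Γ₁ = 0) (ho10 : Γ₁ ∘ₗ Γ₀ = 0)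
    (ho02 : Γ₀ ∘ₗ Γ₂ = 0) (ho20 : Γ₂ ∘ₗ Γ₀ = 0)
    (ho12 : Γ₁ ∘ₗ Γ₂ = 0) (ho21 : Γ₂ ∘ₗ Γ₁ = 0)
    (hsum : Γ₀ + Γ₁ + Γ₂ = LinearMap.id)
    (L : H ≃ₗ[ℂ] H)
    (B : H →ₗ[ℂ] H)
    (hB : B = (Γ₀ + Γ₂) ∘ₗ (L.symm : H →ₗ[ℂ] H) ∘ₗ (Γ₀ + Γ₂))
    -- B' is the inverse of B on the subspace U ⊔ J
    (B' : H →ₗ[ℂ] H) (hB'range : LinearMap.range B' ≤ U ⊔ J)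
    (hB'inv : ∀ x ∈ U ⊔ J, B' (B x) = x ∧ B (B' x) = x)
    (Z : H →ₗ[ℂ] H)
    (hZ : ∀ e ∈ U, Z e ∈ U ∧ ∃ E₀ ∈ E, ∃ J₀ ∈ J, Z e + J₀ = L ((e : H) + E₀)) :
    ∀ e ∈ U, Z e = Γ₀ (B' (Γ₀ e)) := by
  -- helper lemmas about projections on ranges
  have fix0 : ∀ x ∈ U, Γ₀ x = x := by
    intro x hx
    rw [← hr0] at hx
    obtain ⟨y, rfl⟩ := hx
    exact LinearMap.congr_fun hi0 y
  have fix2 : ∀ x ∈ J, Γ₂ x = x := by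
    intro x hx
    rw [← hr2] at hx
    obtain ⟨y, rfl⟩ := hx
    exact LinearMap.congr_fun hi2 y
  have k01 : ∀ x ∈ E, Γ₀ x = 0 := by
    intro x hx
    rw [← hr1] at hx
    obtain ⟨y, rfl⟩ := hx
    exact LinearMap.congr_fun ho01 y
  have k21 : ∀ x ∈ E, Γ₂ x = 0 := by
    intro x hx
    rw [← hr1] at hx
    obtain ⟨y, rfl⟩ := hx
    exact LinearMap.congr_fun ho21 y
  have k02 : ∀ x ∈ J, Γ₀ x = 0 := by
    intro x hx
    rw [← hr2] at hx
    obtain ⟨y, rfl⟩ := hx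
    exact LinearMap.congr_fun ho02 y
  have k20 : ∀ x ∈ U, Γ₂ x = 0 := by
    intro x hx
    rw [← hr0] at hx
    obtain ⟨y, rfl⟩ := hx
    exact LinearMap.congr_fun ho20 y
  intro e he
  obtain ⟨hZU, E₀, hE₀, J₀, hJ₀, heq⟩ := hZ e he
  have hZJ : Z e + J₀ ∈ U ⊔ J :=
    Submodule.add_mem_sup hZU hJ₀
  -- compute B (Z e + J₀) = e
  have hLsymm : L.symm (Z e + J₀) = e + E₀ := by
    rw [heq]; exact L.symm_apply_apply _
  have hBval : B (Z e + J₀) = e := by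
    rw [hB]
    simp only [LinearMap.comp_apply, LinearMap.add_apply, LinearEquiv.coe_coe]
    rw [map_add Γ₀, map_add Γ₂, fix0 _ hZU, k02 _ hJ₀, k20 _ hZU, fix2 _ hJ₀, add_zero, zero_add,
      hLsymm]
    rw [map_add, map_add, fix0 _ he, k01 _ hE₀, k20 _ he, k21 _ hE₀]
    abel
  have h1 := (hB'inv _ hZJ).1
  rw [hBval] at h1
  rw [fix0 _ he, h1, map_add, fix0 _ hZU, k02 _ hJ₀, add_zero]
end
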